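/- If q : ℝ² → ℝ is an affine map and ∫₀¹ q(γ_i(s))·s·(1−s) ds = 0 for each i = 1,2,3 (vanishing of the edge-bubble-weighted moments on all three edges of a nondegenerate triangle), then q = 0. -/
import Mathlib


open MeasureTheory Matrix

noncomputable section

/-- `γ_i(s) = (1-s)·x_{i+1} + s·x_{i+2}`, parametrization of edge `e_i`. -/
def edgePt (x : Fin 3 → Fin 2 → ℝ) (i : Fin 3) (s : ℝ) : Fin 2 → ℝ :=
  (1 - s) • x (i + 1) + s • x (i + 2)

open intervalIntegral in
lemma bubble_integral (A B : ℝ) :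
    (∫ s in (0:ℝ)..1, ((1 - s) * A + s * B) * (s * (1 - s))) = (A + B) / 12 := by
  have h : ∀ s : ℝ, ((1 - s) * A + s * B) * (s * (1 - s))
      = A * s - (2 * A - B) * s ^ 2 + (A - B) * s ^ 3 := by intro s; ring
  simp only [h]
  have i1 : IntervalIntegrable (fun s : ℝ => A * s) volume 0 1 := by
    apply Continuous.intervalIntegrable; continuity
  have i2 : IntervalIntegrable (fun s : ℝ => (2 * A - B) * s ^ 2) volume 0 1 := by
    apply Continuous.intervalIntegrable; continuity
  have i3 : IntervalIntegrable (fun s : ℝ => (A - B) * s ^ 3) volume 0 1 := by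
    apply Continuous.intervalIntegrable; continuity
  rw [intervalIntegral.integral_add (i1.sub i2) i3, intervalIntegral.integral_sub i1 i2,
    intervalIntegral.integral_const_mul, intervalIntegral.integral_const_mul,
    intervalIntegral.integral_const_mul]
  simp [integral_pow]
  ring

/-- An affine map `q : ℝ² → ℝ` whose edge-bubble-weighted moments vanish on all three
edges of a nondegenerate triangle is identically zero. -/
theorem affine_vanishing_moments
    (x : Fin 3 → Fin 2 → ℝ)
    (hx : AffineIndependent ℝ x)
    (q : (Fin 2 → ℝ) → ℝ)
    (hq : ∃ (g : Fin 2 → ℝ) (c : ℝ), ∀ y, q y = g ⬝ᵥ y + c)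
    (hmom : ∀ i : Fin 3, (∫ s in (0:ℝ)..1, q (edgePt x i s) * (s * (1 - s))) = 0) :
    ∀ y, q y = 0 := by
  obtain ⟨g, c, hqgc⟩ := hq
  -- q is affine along edges
  have hline : ∀ (i : Fin 3) (s : ℝ),
      q (edgePt x i s) = (1 - s) * q (x (i + 1)) + s * q (x (i + 2)) := by
    intro i s
    simp only [hqgc, edgePt, dotProduct_add, dotProduct_smul, smul_eq_mul]
    ring
  -- each moment equals (q(x_{i+1}) + q(x_{i+2}))/12
  have hsum : ∀ i : Fin 3, q (x (i + 1)) + q (x (i + 2)) = 0 := by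
    intro i
    have := hmom i
    simp only [hline] at this
    rw [bubble_integral] at this
    linarith
  have h0 := hsum 0
  have h1 := hsum 1
  have h2 := hsum 2
  rw [show (0:Fin 3)+1 = 1 from rfl, show (0:Fin 3)+2 = 2 from rfl] at h0
  rw [show (1:Fin 3)+1 = 2 from rfl, show (1:Fin 3)+2 = 0 from rfl] at h1
  rw [show (2:Fin 3)+1 = 0 from rfl, show (2:Fin 3)+2 = 1 from rfl] at h2
  have hv : ∀ j : Fin 3, q (x j) = 0 := by
    intro j
    fin_cases j
    · show q (x 0) = 0; linarith
    · show q (x 1) = 0; linarith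
    · show q (x 2) = 0; linarith
  -- linear independence of the two edge vectors
  haveI : Nonempty {i : Fin 3 // i ≠ 0} := ⟨⟨1, by decide⟩⟩
  have hli := (affineIndependent_iff_linearIndependent_vsub ℝ x 0).mp hx
  have hcard : Fintype.card {i : Fin 3 // i ≠ 0} = Module.finrank ℝ (Fin 2 → ℝ) := by
    simp [Fintype.card_subtype_compl]
  have hspan := hli.span_eq_top_of_card_eq_finrank hcard
  have hg0 : ∀ j : {i : Fin 3 // i ≠ 0}, g ⬝ᵥ (x (j : Fin 3) -ᵥ x 0) = 0 := by
    intro j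
    have hj := hv (j : Fin 3)
    have h0' := hv 0
    rw [hqgc] at hj h0'
    simp only [vsub_eq_sub, dotProduct_sub]
    linarith
  have hgall : ∀ v : Fin 2 → ℝ, g ⬝ᵥ v = 0 := by
    intro v
    have hv' : v ∈ Submodule.span ℝ (Set.range fun j : {i : Fin 3 // i ≠ 0} =>
        x (j : Fin 3) -ᵥ x 0) := by rw [hspan]; trivial
    induction hv' using Submodule.span_induction with
    | mem w hw => obtain ⟨j, rfl⟩ := hw; exact hg0 j
    | zero => simp
    | add a b _ _ ha hb => rw [dotProduct_add, ha, hb, add_zero]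
    | smul r a _ ha => rw [dotProduct_smul, ha, smul_zero]
  have hc : c = 0 := by
    have := hv 0
    rw [hqgc, hgall] at this
    linarith
  intro y
  rw [hqgc, hgall, hc, add_zero]
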